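/- Let π^ε be a clean compact peg permutation of length n with no entry decorated •, let I = {i,j} with 1 ≤ i ≤ j ≤ n be a multiset of indices of π, and let π̃^ε_I be the peg permutation obtained from the inflation π^ε_I by applying the reversal with indices i+1, j+1. Then π̃^ε_I is a clean compact peg permutation of length n+2 with no entry decorated •. Moreover, if the first entry of π^ε is 1⁺ and the last entry is n⁺, then the first entry of π̃^ε_I is 1⁺ and its last entry is (n+2)⁺. -/

import Mathlib

/-! ## Basic definitions: permutations as lists, reversals, distances -/

/-- Decorations for peg permutations: `+`, `-`, `•`. -/
inductive Deco where
  | plus : Deco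
  | minus : Deco
  | dot : Deco
deriving DecidableEq, Repr

/-- A peg permutation: a list of entries together with decorations. -/
abbrev PegPerm := List (ℕ × Deco)

def pegDefault : ℕ × Deco := (0, Deco.dot)

/-- The identity permutation `1 2 ⋯ n` as a list. -/
def idPerm (n : ℕ) : List ℕ := List.range' 1 n

/-- A list of naturals is a permutation (of `1,…,n` where `n` is its length). -/
def IsPermList (π : List ℕ) : Prop := π.Perm (idPerm π.length)

/-- Reverse the segment of a list from (0-indexed) position `i` to `j` inclusive. -/
def segReverse {α : Type*} (l : List α) (i j : ℕ) : List α :=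
  l.take i ++ ((l.drop i).take (j + 1 - i)).reverse ++ l.drop (j + 1)

/-- One reversal step on permutations (reverse a segment of length at least 2). -/
def RevStep (l l' : List ℕ) : Prop :=
  ∃ i j, i < j ∧ j < l.length ∧ l' = segReverse l i j

/-- One prefix reversal step on permutations (reverse a prefix of length at least 2). -/
def PrefRevStep (l l' : List ℕ) : Prop :=
  ∃ j, 0 < j ∧ j < l.length ∧ l' = segReverse l 0 j

/-- Reachability in exactly `k` steps of the step relation `step`. -/
def ReachIn {α : Type*} (step : α → α → Prop) : ℕ → α → α → Prop
  | 0, x, y => x = y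
  | k + 1, x, y => ∃ z, step x z ∧ ReachIn step k z y

/-- The reversal distance of a permutation from the identity. -/
noncomputable def rd (π : List ℕ) : ℕ :=
  sInf {k | ReachIn RevStep k π (idPerm π.length)}

/-- The prefix reversal distance of a permutation from the identity. -/
noncomputable def prd (π : List ℕ) : ℕ :=
  sInf {k | ReachIn PrefRevStep k π (idPerm π.length)}

/-- The ball of radius `k` in the reversal model. -/
def Brd (k : ℕ) : Set (List ℕ) := {π | IsPermList π ∧ rd π ≤ k}

/-- The ball of radius `k` in the prefix reversal model. -/
def Bprd (k : ℕ) : Set (List ℕ) := {π | IsPermList π ∧ prd π ≤ k}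

/-! ## Peg permutations: oriented reversals and distances -/

def flipDeco : Deco → Deco
  | Deco.plus => Deco.minus
  | Deco.minus => Deco.plus
  | Deco.dot => Deco.dot

/-- Oriented reversal of the segment from position `i` to `j` (0-indexed) of a peg
permutation: the segment is reversed and the decorations `+`, `-` are swapped. -/
def pegSegReverse (l : PegPerm) (i j : ℕ) : PegPerm :=
  l.take i ++ (((l.drop i).take (j + 1 - i)).map (fun p => (p.1, flipDeco p.2))).reverse
    ++ l.drop (j + 1)

/-- One oriented reversal step on peg permutations. -/
def PegRevStep (l l' : PegPerm) : Prop :=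
  ∃ i j, i ≤ j ∧ j < l.length ∧ l' = pegSegReverse l i j

/-- One oriented prefix reversal step on peg permutations. -/
def PegPrefRevStep (l l' : PegPerm) : Prop :=
  ∃ j, j < l.length ∧ l' = pegSegReverse l 0 j

/-- The underlying list of a peg permutation is a permutation. -/
def IsPegPermList (l : PegPerm) : Prop := IsPermList (l.map Prod.fst)

/-- An identity peg permutation: underlying identity, every decoration `+` or `•`. -/
def IsIdPeg (l : PegPerm) : Prop :=
  l.map Prod.fst = idPerm l.length ∧ ∀ p ∈ l, p.2 ≠ Deco.minus

/-- The reversal distance of a peg permutation from an identity peg permutation. -/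
noncomputable def pegRd (l : PegPerm) : ℕ :=
  sInf {k | ∃ m, IsIdPeg m ∧ ReachIn PegRevStep k l m}

/-- The prefix reversal distance of a peg permutation from an identity peg permutation. -/
noncomputable def pegPrd (l : PegPerm) : ℕ :=
  sInf {k | ∃ m, IsIdPeg m ∧ ReachIn PegPrefRevStep k l m}

/-- The ball of radius `k` of peg permutations in the reversal model. -/
def PegBrd (k : ℕ) : Set PegPerm := {l | IsPegPermList l ∧ pegRd l ≤ k}

/-- The ball of radius `k` of peg permutations in the prefix reversal model. -/
def PegBprd (k : ℕ) : Set PegPerm := {l | IsPegPermList l ∧ pegPrd l ≤ k}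

/-! ## Patterns -/

/-- Two lists of the same length are order-isomorphic. -/
def OrderIsoList (s t : List ℕ) : Prop :=
  s.length = t.length ∧
  ∀ i j, i < s.length → j < s.length → (s.getD i 0 < s.getD j 0 ↔ t.getD i 0 < t.getD j 0)

/-- `σ` is a (classical) pattern of `τ`. -/
def IsPattern (σ τ : List ℕ) : Prop :=
  ∃ s, s.Sublist τ ∧ OrderIsoList s σ

/-- `σ` is a peg pattern of `τ`: some subsequence of `τ` is order-isomorphic to `σ`
and whenever an entry of the subsequence is decorated `+` (resp. `-`), the
corresponding entry of `σ` is decorated `+` (resp. `-`). -/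
def IsPegPattern (σ τ : PegPerm) : Prop :=
  ∃ s : PegPerm, s.Sublist τ ∧ OrderIsoList (s.map Prod.fst) (σ.map Prod.fst) ∧
    ∀ i, i < s.length →
      ((s.getD i pegDefault).2 = Deco.plus → (σ.getD i pegDefault).2 = Deco.plus) ∧
      ((s.getD i pegDefault).2 = Deco.minus → (σ.getD i pegDefault).2 = Deco.minus)

/-! ## Strips, clean compact and compact peg permutations -/

/-- Two adjacent entries of a peg permutation lie in a common strip. -/
def StripPair (p q : ℕ × Deco) : Prop :=
  (q.1 = p.1 + 1 ∧ p.2 ≠ Deco.minus ∧ q.2 ≠ Deco.minus) ∨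
  (p.1 = q.1 + 1 ∧ p.2 ≠ Deco.plus ∧ q.2 ≠ Deco.plus)

/-- A peg permutation is clean compact when all its strips have length 1, i.e. no two
adjacent entries lie in a common strip. -/
def CleanCompact (l : PegPerm) : Prop :=
  ∀ i, i + 1 < l.length → ¬ StripPair (l.getD i pegDefault) (l.getD (i + 1) pegDefault)

/-- A peg permutation is compact when every strip has length 1 or consists
exclusively of entries decorated `•`. -/
def CompactPeg (l : PegPerm) : Prop :=
  ∀ i, i + 1 < l.length → StripPair (l.getD i pegDefault) (l.getD (i + 1) pegDefault) →
    (l.getD i pegDefault).2 = Deco.dot ∧ (l.getD (i + 1) pegDefault).2 = Deco.dot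

/-! ## The clean compact peg permutation `peg(γ)` associated with a permutation -/

/-- The decomposition of a permutation into maximal monotone strips of adjacent values. -/
def stripGroups (γ : List ℕ) : List (List ℕ) :=
  γ.splitBy (fun a b => b == a + 1 || a == b + 1)

def stripMin (s : List ℕ) : ℕ := s.foldr min (s.headD 0)

def stripDeco (s : List ℕ) : Deco :=
  if s.length ≤ 1 then Deco.dot
  else if s.headD 0 < s.getLastD 0 then Deco.plus
  else Deco.minus

/-- Rank of `v` among `vals` (used for rescaling). -/
def rankIn (vals : List ℕ) (v : ℕ) : ℕ := (vals.filter (fun w => w ≤ v)).length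

/-- The clean compact peg permutation associated with a permutation: replace each
strip by its minimum, decorated `+`/`-`/`•` according to the kind of strip, and rescale. -/
def pegOf (γ : List ℕ) : PegPerm :=
  (stripGroups γ).map (fun s => (rankIn ((stripGroups γ).map stripMin) (stripMin s), stripDeco s))

/-! ## Monotone inflations and grid classes -/

/-- A legal inflation vector for a peg permutation. -/
def LegalVec (πε : PegPerm) (v : List ℕ) : Prop :=
  v.length = πε.length ∧
  ∀ i, i < πε.length → (πε.getD i pegDefault).2 = Deco.dot → v.getD i 0 ≤ 1

/-- The values of the `i`-th block of the monotone inflation of `πε` through `v`: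
an increasing (resp. decreasing) run of `vᵢ` values, occupying the interval of values
determined by the relative order of the entries of `πε`. -/
def blockVals (πε : PegPerm) (v : List ℕ) (i : ℕ) : List ℕ :=
  let off := (((List.range πε.length).filter
      (fun j => (πε.getD j pegDefault).1 < (πε.getD i pegDefault).1)).map
      (fun j => v.getD j 0)).sum
  if (πε.getD i pegDefault).2 = Deco.minus then (List.range' (off + 1) (v.getD i 0)).reverse
  else List.range' (off + 1) (v.getD i 0)

/-- The monotone inflation `πε[v]`. -/
def inflate (πε : PegPerm) (v : List ℕ) : List ℕ :=
  ((List.range πε.length).map (blockVals πε v)).flatten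

/-- The grid class of a peg permutation: all its monotone inflations through legal
inflation vectors. -/
def GridOf (πε : PegPerm) : Set (List ℕ) :=
  {γ | ∃ v, LegalVec πε v ∧ γ = inflate πε v}

/-- Compatibility of decorations in peg monotone inflations: a `+` entry is inflated by
an identity peg permutation (decorations `+`/`•`), a `-` entry by a reverse identity peg
permutation (decorations `-`/`•`), a `•` entry stays `•`. -/
def DecoOK : Deco → Deco → Prop
  | Deco.plus, d => d ≠ Deco.minus
  | Deco.minus, d => d ≠ Deco.plus
  | Deco.dot, d => d = Deco.dot

/-- The peg grid class of a peg permutation: all its peg monotone inflations. -/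
def GridPegOf (πε : PegPerm) : Set PegPerm :=
  {γ | ∃ v, LegalVec πε v ∧ ∃ bs : List PegPerm,
    bs.length = πε.length ∧ γ = bs.flatten ∧
    ∀ i, i < πε.length →
      (bs.getD i []).map Prod.fst = blockVals πε v i ∧
      ∀ p ∈ bs.getD i [], DecoOK (πε.getD i pegDefault).2 p.2}

/-! ## The inflation `π^ε_I` and the permutation `π̃^ε_I` -/

/-- Canonical peg inflation: every inflated entry keeps the decoration of the
original one. -/
def pegInflate (πε : PegPerm) (v : List ℕ) : PegPerm :=
  ((List.range πε.length).map
    (fun i => (blockVals πε v i).map (fun x => (x, (πε.getD i pegDefault).2)))).flatten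

/-- The inflation vector associated with the multiset `I = {i, j}` (0-indexed):
entries `i` and `j` are inflated by one more element each. -/
def inflVec (n i j : ℕ) : List ℕ :=
  (List.range n).map (fun l => 1 + (if l = i then 1 else 0) + (if l = j then 1 else 0))

/-- `π^ε_I` where `I = {i, j}` with `i ≤ j` 0-indexed. -/
def pegI (πε : PegPerm) (i j : ℕ) : PegPerm := pegInflate πε (inflVec πε.length i j)

/-- `π̃^ε_I`: the result of applying to `π^ε_I` the oriented reversal of the segment
of (0-indexed) positions `i+1, …, j+1`. -/
def pegITilde (πε : PegPerm) (i j : ℕ) : PegPerm := pegSegReverse (pegI πε i j) (i + 1) (j + 1)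

/-! ## Clean compact peg bases -/

/-- The clean compact peg basis of a set `B` of peg permutations: the clean compact
peg permutations not in `B` all of whose proper clean compact peg patterns are in `B`. -/
def CCPegBasis (B : Set PegPerm) : Set PegPerm :=
  {πε | IsPegPermList πε ∧ CleanCompact πε ∧ πε ∉ B ∧
    ∀ γ, IsPegPermList γ → CleanCompact γ → IsPegPattern γ πε → γ ≠ πε → γ ∈ B}

/-! ## The exceptional peg permutations for the prefix reversal model -/

/-- `Θ_e(n)` for even `n`:  `n• (n−2)• ⋯ 4• 2• 1⁺ 3• ⋯ (n−3)• (n−1)•`. -/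
def ThetaE (n : ℕ) : PegPerm :=
  ((List.range (n / 2)).map (fun i => (n - 2 * i, Deco.dot))) ++ [(1, Deco.plus)] ++
  ((List.range (n / 2 - 1)).map (fun i => (3 + 2 * i, Deco.dot)))

/-- `Θ_o(n)` for odd `n`:  `n• (n−2)• ⋯ 3• 1⁻ 2• 4• ⋯ (n−3)• (n−1)•`. -/
def ThetaO (n : ℕ) : PegPerm :=
  ((List.range ((n - 1) / 2)).map (fun i => (n - 2 * i, Deco.dot))) ++ [(1, Deco.minus)] ++
  ((List.range ((n - 1) / 2)).map (fun i => (2 + 2 * i, Deco.dot)))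

/-- `Λ_e(n)` for even `n` and `t = n/2`:  `(t+1)⁺ t• (t+2)• (t−1)• ⋯ (n−1)• 2• n• 1•`. -/
def LambdaE (n : ℕ) : PegPerm :=
  (List.range (n / 2)).flatMap
    (fun i => [(n / 2 + 1 + i, if i = 0 then Deco.plus else Deco.dot), (n / 2 - i, Deco.dot)])

/-- `Λ_o(n)` for odd `n` and `t = (n+1)/2`:  `t⁻ (t+1)• (t−1)• (t+2)• ⋯ (n−1)• 2• n• 1•`. -/
def LambdaO (n : ℕ) : PegPerm :=
  ((n + 1) / 2, Deco.minus) ::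
    (List.range ((n + 1) / 2 - 1)).flatMap
      (fun i => [((n + 1) / 2 + 1 + i, Deco.dot), ((n + 1) / 2 - 1 - i, Deco.dot)])

/-!
Write `a, b` for the values at positions `i, j`. The inflation `π^ε_I` is the concatenation
of the blocks `inflBlock a b r` over the entries `r` of `π^ε`: the block of an entry of value
`v` is the monotone run (decreasing for `−`) of the `inflLen a b v` values starting at
`inflStart a b v`. Since `inflStart a b w = inflStart a b v + inflLen a b v` exactly when
`w = v + 1`, the last entry of a block and the first entry of the next one form a strip only
if the corresponding entries of `π^ε` do, so all strips of `π^ε_I` lie inside the blocks at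
positions `i` and `j`. The reversal of positions `i+1, …, j+1` cuts through exactly these
blocks, and inside the reversed segment an oriented reversal maps non-strips to non-strips.
At the two new junctions, either the flip leaves opposite decorations, or a strip would force
the blocks at positions `i` and `j` to start at the same value.
-/

lemma flipDeco_eq_dot_iff {d : Deco} : flipDeco d = .dot ↔ d = .dot := by
  cases d <;> simp [flipDeco]

def flipEntry (p : ℕ × Deco) : ℕ × Deco := (p.1, flipDeco p.2)

lemma stripPair_flipEntry_flipEntry {p q : ℕ × Deco} :
    StripPair (flipEntry q) (flipEntry p) ↔ StripPair p q := by
  obtain ⟨a, d⟩ := p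
  obtain ⟨b, e⟩ := q
  cases d <;> cases e <;> simp [StripPair, flipEntry, flipDeco]; omega

lemma not_stripPair_flipEntry_right {p q : ℕ × Deco} (h : p.2 = q.2) (hq : q.2 ≠ .dot) :
    ¬ StripPair p (flipEntry q) := by
  obtain ⟨a, d⟩ := p
  obtain ⟨b, e⟩ := q
  cases d <;> cases e <;> simp_all [StripPair, flipEntry, flipDeco]

lemma not_stripPair_flipEntry_left {p q : ℕ × Deco} (h : p.2 = q.2) (hp : p.2 ≠ .dot) :
    ¬ StripPair (flipEntry p) q := by
  obtain ⟨a, d⟩ := p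
  obtain ⟨b, e⟩ := q
  cases d <;> cases e <;> simp_all [StripPair, flipEntry, flipDeco]

lemma cleanCompact_iff_isChain {l : PegPerm} :
    CleanCompact l ↔ l.IsChain (¬ StripPair · ·) := by
  rw [List.isChain_iff_getElem]
  refine forall_congr' fun k => forall_congr' fun hk => ?_
  rw [List.getD_eq_getElem _ _ hk, List.getD_eq_getElem _ _ (Nat.lt_of_succ_lt hk)]

lemma pegSegReverse_append {X Y Z : PegPerm} {a b : ℕ} (ha : X.length = a)
    (hb : X.length + Y.length = b + 1) :
    pegSegReverse (X ++ Y ++ Z) a b = X ++ (Y.map flipEntry).reverse ++ Z := by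
  subst ha
  simp [pegSegReverse, ← hb, List.drop_append, List.drop_eq_nil_of_le, flipEntry]

lemma cleanCompact_pegSegReverse_append {X Y Z : PegPerm} {a b : ℕ} (ha : X.length = a)
    (hb : X.length + Y.length = b + 1) (hYne : Y ≠ []) (hX : X.IsChain (¬ StripPair · ·))
    (hY : Y.IsChain (¬ StripPair · ·)) (hZ : Z.IsChain (¬ StripPair · ·))
    (hXY : ∀ x ∈ X.getLast?, ∀ y ∈ Y.getLast?, ¬ StripPair x (flipEntry y))
    (hYZ : ∀ y ∈ Y.head?, ∀ z ∈ Z.head?, ¬ StripPair (flipEntry y) z) :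
    CleanCompact (pegSegReverse (X ++ Y ++ Z) a b) := by
  rw [pegSegReverse_append ha hb, cleanCompact_iff_isChain]
  have hY' : (Y.map flipEntry).reverse.IsChain (¬ StripPair · ·) := by
    rw [List.isChain_reverse, List.isChain_map]
    exact hY.imp fun p q h => by rwa [stripPair_flipEntry_flipEntry]
  refine (hX.append hY' ?_).append hZ ?_
  · intro x hx y hy
    rw [List.head?_reverse, List.getLast?_map] at hy
    obtain ⟨y', hy', rfl⟩ := Option.mem_map.1 hy
    exact hXY x hx y' hy'
  · intro y hy z hz
    rw [List.getLast?_append_of_ne_nil, List.getLast?_reverse, List.head?_map] at hy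
    · obtain ⟨y', hy', rfl⟩ := Option.mem_map.1 hy
      exact hYZ y' hy' z hz
    · simpa using hYne

section pegSegReverse

variable {l : PegPerm} {a b : ℕ}

lemma length_pegSegReverse (hab : a ≤ b + 1) (hb : b < l.length) :
    (pegSegReverse l a b).length = l.length := by
  simp [pegSegReverse]
  omega

lemma mem_pegSegReverse {x : ℕ × Deco} (hx : x ∈ pegSegReverse l a b) :
    x ∈ l ∨ ∃ y ∈ l, x = flipEntry y := by
  simp only [pegSegReverse, List.mem_append, List.mem_reverse, List.mem_map] at hx
  rcases hx with (hx | ⟨y, hy, rfl⟩) | hx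
  · exact .inl (List.mem_of_mem_take hx)
  · exact .inr ⟨y, List.mem_of_mem_drop (List.mem_of_mem_take hy), rfl⟩
  · exact .inl (List.mem_of_mem_drop hx)

lemma head?_pegSegReverse (ha : 0 < a) : (pegSegReverse l a b).head? = l.head? := by
  obtain ⟨a, rfl⟩ := Nat.exists_eq_add_one_of_ne_zero ha.ne'
  cases l <;> simp [pegSegReverse]

lemma getLast?_pegSegReverse (hb : b + 1 < l.length) :
    (pegSegReverse l a b).getLast? = l.getLast? := by
  have hne : l.drop (b + 1) ≠ [] := by simpa using hb
  rw [pegSegReverse, List.getLast?_append_of_ne_nil _ hne, List.getLast?_drop]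
  simp [show ¬ l.length ≤ b + 1 by omega]

end pegSegReverse

def inflStart (a b v : ℕ) : ℕ := v + (if a < v then 1 else 0) + (if b < v then 1 else 0)

def inflLen (a b v : ℕ) : ℕ := 1 + (if v = a then 1 else 0) + (if v = b then 1 else 0)

section inflStart

variable {a b : ℕ}

lemma inflStart_succ (v : ℕ) : inflStart a b (v + 1) = inflStart a b v + inflLen a b v := by
  simp only [inflStart, inflLen]
  split_ifs <;> omega

lemma inflStart_eq_add_inflLen_iff {v w : ℕ} :
    inflStart a b w = inflStart a b v + inflLen a b v ↔ w = v + 1 := by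
  simp only [inflStart, inflLen]
  split_ifs <;> omega

lemma inflStart_injective : Function.Injective (inflStart a b) := by
  intro v w h
  simp only [inflStart] at h
  split_ifs at h <;> omega

lemma inflLen_pos (v : ℕ) : 0 < inflLen a b v := by
  simp [inflLen]

lemma inflLen_left_of_ne (hab : a ≠ b) : inflLen a b a = 2 := by
  simp [inflLen, hab]

lemma inflLen_right_of_ne (hab : a ≠ b) : inflLen a b b = 2 := by
  simp [inflLen, hab.symm]

lemma inflStart_one (ha : 1 ≤ a) (hb : 1 ≤ b) : inflStart a b 1 = 1 := by
  simp only [inflStart]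
  split_ifs <;> omega

lemma sum_inflLen_filter_lt (ha : 1 ≤ a) (hb : 1 ≤ b) {w : ℕ} (hw : 1 ≤ w) (m : ℕ) :
    (((List.range' 1 m).filter (· < w)).map (inflLen a b)).sum + 1 =
      inflStart a b (min w (m + 1)) := by
  induction m with
  | zero => simp [inflStart_one ha hb, min_eq_right hw]
  | succ m ih =>
    rw [List.range'_concat, List.filter_append, List.map_append, List.sum_append,
      Nat.add_right_comm, ih, Nat.one_mul, Nat.add_comm 1 m]
    by_cases hmw : m + 1 < w
    · simp [hmw, min_eq_right hmw.le, inflStart_succ]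
    · simp [hmw, min_eq_left (show w ≤ m + 1 by omega), min_eq_left (show w ≤ m + 2 by omega)]

end inflStart

def inflBlock (a b : ℕ) (r : ℕ × Deco) : PegPerm :=
  (if r.2 = Deco.minus then (List.range' (inflStart a b r.1) (inflLen a b r.1)).reverse
    else List.range' (inflStart a b r.1) (inflLen a b r.1)).map (fun x => (x, r.2))

def inflHead (a b : ℕ) (r : ℕ × Deco) : ℕ × Deco :=
  (if r.2 = Deco.minus then inflStart a b r.1 + inflLen a b r.1 - 1 else inflStart a b r.1, r.2)

def inflLast (a b : ℕ) (r : ℕ × Deco) : ℕ × Deco :=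
  (if r.2 = Deco.minus then inflStart a b r.1 else inflStart a b r.1 + inflLen a b r.1 - 1, r.2)

section inflBlock

variable {a b : ℕ} {r : ℕ × Deco}

lemma inflBlock_of_inflLen_eq_one (h : inflLen a b r.1 = 1) :
    inflBlock a b r = [inflLast a b r] := by
  simp only [inflBlock, inflLast, h]
  split_ifs <;> simp

lemma inflBlock_of_inflLen_eq_two (h : inflLen a b r.1 = 2) :
    inflBlock a b r = [inflHead a b r, inflLast a b r] := by
  simp only [inflBlock, inflHead, inflLast, h]
  split_ifs <;> simp [List.range'_succ]

lemma inflBlock_self :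
    inflBlock r.1 r.1 r =
      [inflHead r.1 r.1 r, (inflStart r.1 r.1 r.1 + 1, r.2), inflLast r.1 r.1 r] := by
  have h : inflLen r.1 r.1 r.1 = 3 := by simp [inflLen]
  simp only [inflBlock, inflHead, inflLast, h]
  split_ifs <;> simp [List.range'_succ]

lemma inflLast_eq_inflHead_of_inflLen_eq_one (h : inflLen a b r.1 = 1) :
    inflLast a b r = inflHead a b r := by
  simp [inflLast, inflHead, h]

lemma length_inflBlock : (inflBlock a b r).length = inflLen a b r.1 := by
  unfold inflBlock
  split_ifs <;> simp

lemma snd_of_mem_inflBlock {x : ℕ × Deco} (hx : x ∈ inflBlock a b r) : x.2 = r.2 := by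
  unfold inflBlock at hx
  split_ifs at hx <;> simp at hx <;> obtain ⟨_, _, rfl⟩ := hx <;> rfl

lemma head?_inflBlock : (inflBlock a b r).head? = some (inflHead a b r) := by
  obtain ⟨k, hk⟩ := Nat.exists_eq_add_one_of_ne_zero (inflLen_pos (a := a) (b := b) r.1).ne'
  simp only [inflBlock, inflHead, hk]
  split_ifs
  · simp [List.range'_concat]
  · simp [List.range'_succ]

lemma getLast?_inflBlock : (inflBlock a b r).getLast? = some (inflLast a b r) := by
  obtain ⟨k, hk⟩ := Nat.exists_eq_add_one_of_ne_zero (inflLen_pos (a := a) (b := b) r.1).ne'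
  simp only [inflBlock, inflLast, hk]
  split_ifs
  · simp [List.range'_succ, List.getLast?_reverse]
  · simp [List.range'_concat]

end inflBlock

section link

variable {a b : ℕ} {r r' : ℕ × Deco}

lemma not_stripPair_inflLast_inflHead (hr : r.2 ≠ .dot) (hr' : r'.2 ≠ .dot)
    (h : ¬ StripPair r r') : ¬ StripPair (inflLast a b r) (inflHead a b r') := by
  obtain ⟨v, d⟩ := r
  obtain ⟨w, e⟩ := r'
  have hvw := inflStart_eq_add_inflLen_iff (a := a) (b := b) (v := v) (w := w)
  have hwv := inflStart_eq_add_inflLen_iff (a := a) (b := b) (v := w) (w := v)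
  have hv := inflLen_pos (a := a) (b := b) v
  have hw := inflLen_pos (a := a) (b := b) w
  cases d <;> cases e <;> simp_all [StripPair, inflLast, inflHead] <;> omega

lemma not_stripPair_inflHead_flipEntry_inflHead (hne : r.1 ≠ r'.1) (hr : r.2 ≠ .dot)
    (hr' : r'.2 ≠ .dot) :
    ¬ StripPair (inflHead r.1 r'.1 r) (flipEntry (inflHead r.1 r'.1 r')) := by
  obtain ⟨v, d⟩ := r
  obtain ⟨w, e⟩ := r'
  have hvw := (inflStart_injective (a := v) (b := w)).ne hne
  have hwv := (inflStart_injective (a := v) (b := w)).ne hne.symm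
  have hv := inflLen_left_of_ne hne
  have hw := inflLen_right_of_ne hne
  cases d <;> cases e <;> simp_all [StripPair, inflHead, flipEntry, flipDeco]

lemma not_stripPair_flipEntry_inflLast_inflLast (hne : r.1 ≠ r'.1) (hr : r.2 ≠ .dot)
    (hr' : r'.2 ≠ .dot) :
    ¬ StripPair (flipEntry (inflLast r.1 r'.1 r)) (inflLast r.1 r'.1 r') := by
  obtain ⟨v, d⟩ := r
  obtain ⟨w, e⟩ := r'
  have hvw := (inflStart_injective (a := v) (b := w)).ne hne
  have hwv := (inflStart_injective (a := v) (b := w)).ne hne.symm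
  have hv := inflLen_left_of_ne hne
  have hw := inflLen_right_of_ne hne
  cases d <;> cases e <;> simp_all [StripPair, inflLast, flipEntry, flipDeco]

end link

section chain

variable {a b : ℕ}

lemma flatMap_inflBlock_of_forall_inflLen_eq_one {l : PegPerm}
    (h : ∀ r ∈ l, inflLen a b r.1 = 1) : l.flatMap (inflBlock a b) = l.map (inflLast a b) := by
  induction l with
  | nil => rfl
  | cons r l ih =>
    simp only [List.forall_mem_cons] at h
    simp [inflBlock_of_inflLen_eq_one h.1, ih h.2]

lemma isChain_map_inflLast {l : PegPerm} (hl : l.IsChain (¬ StripPair · ·))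
    (hdot : ∀ r ∈ l, r.2 ≠ .dot) (hlen : ∀ r ∈ l.tail, inflLen a b r.1 = 1) :
    (l.map (inflLast a b)).IsChain (¬ StripPair · ·) := by
  rw [List.isChain_map]
  refine hl.imp_of_mem_tail_imp fun x y hx hy h => ?_
  rw [inflLast_eq_inflHead_of_inflLen_eq_one (hlen y hy)]
  exact not_stripPair_inflLast_inflHead (hdot x hx) (hdot y (List.mem_of_mem_tail hy)) h

lemma isChain_map_inflLast_append_inflHead {l : PegPerm} {r : ℕ × Deco}
    (hl : (l ++ [r]).IsChain (¬ StripPair · ·)) (hdot : ∀ x ∈ l ++ [r], x.2 ≠ .dot)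
    (hlen : ∀ x ∈ l.tail, inflLen a b x.1 = 1) :
    (l.map (inflLast a b) ++ [inflHead a b r]).IsChain (¬ StripPair · ·) := by
  obtain ⟨hl', -, hlr⟩ := List.isChain_append.1 hl
  refine (isChain_map_inflLast hl' (fun x hx => hdot x (by simp [hx])) hlen).append
    (List.isChain_singleton _) fun x hx y hy => ?_
  rw [List.getLast?_map] at hx
  obtain ⟨x', hx', rfl⟩ := Option.mem_map.1 hx
  obtain rfl : y = inflHead a b r := by simpa using hy.symm
  exact not_stripPair_inflLast_inflHead (hdot x' (by simp [List.mem_of_getLast? hx']))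
    (hdot r (by simp)) (hlr x' hx' r rfl)

end chain

lemma cleanCompact_pegSegReverse_flatMap_inflBlock_of_ne {A B C : PegPerm} {p q : ℕ × Deco}
    (hchain : (A ++ p :: B ++ q :: C).IsChain (¬ StripPair · ·))
    (hdot : ∀ r ∈ A ++ p :: B ++ q :: C, r.2 ≠ .dot) (hpq : p.1 ≠ q.1)
    (hplain : ∀ r ∈ A ++ B ++ C, r.1 ≠ p.1 ∧ r.1 ≠ q.1) :
    CleanCompact (pegSegReverse ((A ++ p :: B ++ q :: C).flatMap (inflBlock p.1 q.1))
      (A.length + 1) (A.length + B.length + 2)) := by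
  have hlen : ∀ r ∈ A ++ B ++ C, inflLen p.1 q.1 r.1 = 1 := fun r hr => by
    simp [inflLen, hplain r hr]
  have hflat : (A ++ p :: B ++ q :: C).flatMap (inflBlock p.1 q.1) =
      (A.map (inflLast p.1 q.1) ++ [inflHead p.1 q.1 p]) ++
      ((p :: B).map (inflLast p.1 q.1) ++ [inflHead p.1 q.1 q]) ++
      (q :: C).map (inflLast p.1 q.1) := by
    have hsingle := fun l (hl : l ⊆ A ++ B ++ C) =>
      flatMap_inflBlock_of_forall_inflLen_eq_one (l := l) fun r hr => hlen r (hl hr)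
    simp [hsingle A (by simp), hsingle B (by simp), hsingle C (by simp),
      inflBlock_of_inflLen_eq_two (inflLen_left_of_ne hpq),
      inflBlock_of_inflLen_eq_two (inflLen_right_of_ne hpq)]
  rw [hflat]
  have hX : A ++ [p] <:+: A ++ p :: B ++ q :: C := ⟨[], B ++ q :: C, by simp⟩
  have hY : p :: B ++ [q] <:+: A ++ p :: B ++ q :: C := ⟨A, C, by simp⟩
  have hZ : q :: C <:+: A ++ p :: B ++ q :: C := ⟨A ++ p :: B, [], by simp⟩
  apply cleanCompact_pegSegReverse_append (by simp) (by simp; omega) (by simp)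
  · exact isChain_map_inflLast_append_inflHead (hchain.infix hX)
      (fun x hx => hdot x (hX.subset hx))
      (fun x hx => hlen x (by simp [List.mem_of_mem_tail hx]))
  · exact isChain_map_inflLast_append_inflHead (hchain.infix hY)
      (fun x hx => hdot x (hY.subset hx))
      (fun x hx => hlen x (by simp_all))
  · exact isChain_map_inflLast (hchain.infix hZ) (fun x hx => hdot x (hZ.subset hx))
      (fun x hx => hlen x (by simp_all))
  · intro x hx y hy
    rw [List.getLast?_concat, Option.mem_some_iff] at hx hy
    subst hx hy
    exact not_stripPair_inflHead_flipEntry_inflHead hpq (hdot p (by simp)) (hdot q (by simp))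
  · intro x hx y hy
    simp only [List.map_cons, List.head?_cons, List.cons_append, Option.mem_some_iff] at hx hy
    subst hx hy
    exact not_stripPair_flipEntry_inflLast_inflLast hpq (hdot p (by simp)) (hdot q (by simp))

lemma cleanCompact_pegSegReverse_flatMap_inflBlock_self {A C : PegPerm} {p : ℕ × Deco}
    (hchain : (A ++ p :: C).IsChain (¬ StripPair · ·))
    (hdot : ∀ r ∈ A ++ p :: C, r.2 ≠ .dot) (hplain : ∀ r ∈ A ++ C, r.1 ≠ p.1) :
    CleanCompact (pegSegReverse ((A ++ p :: C).flatMap (inflBlock p.1 p.1))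
      (A.length + 1) (A.length + 1)) := by
  have hlen : ∀ r ∈ A ++ C, inflLen p.1 p.1 r.1 = 1 := fun r hr => by
    simp [inflLen, hplain r hr]
  have hflat : (A ++ p :: C).flatMap (inflBlock p.1 p.1) =
      (A.map (inflLast p.1 p.1) ++ [inflHead p.1 p.1 p]) ++
      [(inflStart p.1 p.1 p.1 + 1, p.2)] ++ (p :: C).map (inflLast p.1 p.1) := by
    have hsingle := fun l (hl : l ⊆ A ++ C) =>
      flatMap_inflBlock_of_forall_inflLen_eq_one (l := l) fun r hr => hlen r (hl hr)
    simp [hsingle A (by simp), hsingle C (by simp), inflBlock_self]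
  have hp := hdot p (by simp)
  rw [hflat]
  have hX : A ++ [p] <:+: A ++ p :: C := ⟨[], C, by simp⟩
  have hZ : p :: C <:+: A ++ p :: C := ⟨A, [], by simp⟩
  apply cleanCompact_pegSegReverse_append (by simp) (by simp) (by simp)
  · exact isChain_map_inflLast_append_inflHead (hchain.infix hX)
      (fun x hx => hdot x (hX.subset hx))
      (fun x hx => hlen x (by simp [List.mem_of_mem_tail hx]))
  · exact List.isChain_singleton _
  · exact isChain_map_inflLast (hchain.infix hZ) (fun x hx => hdot x (hZ.subset hx))
      (fun x hx => hlen x (by simp_all))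
  · intro x hx y hy
    rw [List.getLast?_concat, Option.mem_some_iff] at hx
    simp only [List.getLast?_singleton, Option.mem_some_iff] at hy
    subst hx hy
    exact not_stripPair_flipEntry_right (by simp [inflHead]) hp
  · intro x hx y hy
    simp only [List.head?_cons, List.map_cons, Option.mem_some_iff] at hx hy
    subst hx hy
    exact not_stripPair_flipEntry_left (by simp [inflLast]) hp

lemma map_getD_fst_range (πε : PegPerm) :
    (List.range πε.length).map (fun m => (πε.getD m pegDefault).1) = πε.map Prod.fst :=
  List.ext_getElem (by simp) fun m hm _ => by
    simp [List.getElem?_eq_getElem (by simpa using hm : m < πε.length)]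

section pegI

variable {πε : PegPerm}

lemma IsPegPermList.nodup (h0 : IsPegPermList πε) : (πε.map Prod.fst).Nodup :=
  (List.Perm.nodup_iff h0).2 List.nodup_range'

lemma IsPegPermList.fst_bounds (h0 : IsPegPermList πε) {r : ℕ × Deco} (hr : r ∈ πε) :
    1 ≤ r.1 ∧ r.1 ≤ πε.length := by
  have := h0.mem_iff.1 (List.mem_map_of_mem (f := Prod.fst) hr)
  simp only [idPerm, List.length_map, List.mem_range'_1] at this
  omega

lemma inflVec_getD {i j m : ℕ} (h0 : IsPegPermList πε) (hi : i < πε.length)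
    (hj : j < πε.length) (hm : m < πε.length) :
    (inflVec πε.length i j).getD m 0 = inflLen πε[i].1 πε[j].1 πε[m].1 := by
  have hinj : ∀ k (hk : k < πε.length), πε[m].1 = πε[k].1 ↔ m = k := fun k hk => by
    have := h0.nodup.getElem_inj_iff (i := m) (j := k) (hi := by simpa) (hj := by simpa)
    rwa [List.getElem_map, List.getElem_map] at this
  simp [inflVec, inflLen, hm, hinj i hi, hinj j hj]

lemma blockVals_inflVec {i j k : ℕ} (h0 : IsPegPermList πε) (hi : i < πε.length)
    (hj : j < πε.length) (hk : k < πε.length) :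
    (blockVals πε (inflVec πε.length i j) k).map (fun x => (x, (πε.getD k pegDefault).2)) =
      inflBlock πε[i].1 πε[j].1 πε[k] := by
  set a := πε[i].1
  set b := πε[j].1
  have hoff : (((List.range πε.length).filter
      (fun m => (πε.getD m pegDefault).1 < πε[k].1)).map
      (fun m => (inflVec πε.length i j).getD m 0)).sum + 1 = inflStart a b πε[k].1 := by
    rw [List.map_congr_left fun m hm => by
      have hm : m < πε.length := by simpa using (List.mem_filter.1 hm).1
      rw [inflVec_getD h0 hi hj hm, ← List.getD_eq_getElem _ pegDefault hm]]
    have hvals : ((List.range πε.length).filter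
        (fun m => (πε.getD m pegDefault).1 < πε[k].1)).map
        (fun m => inflLen a b (πε.getD m pegDefault).1) =
        ((πε.map Prod.fst).filter (· < πε[k].1)).map (inflLen a b) := by
      rw [← map_getD_fst_range, List.filter_map, List.map_map]
      rfl
    have ha := h0.fst_bounds (List.getElem_mem hi)
    have hb := h0.fst_bounds (List.getElem_mem hj)
    have hk' := h0.fst_bounds (List.getElem_mem hk)
    rw [hvals, ((h0.filter _).map _).sum_eq, idPerm, List.length_map,
      sum_inflLen_filter_lt ha.1 hb.1 hk'.1, min_eq_left (by omega)]
  simp only [blockVals, List.getD_eq_getElem _ _ hk]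
  rw [hoff, inflVec_getD h0 hi hj hk]
  rfl

lemma pegI_eq_flatMap {i j : ℕ} (h0 : IsPegPermList πε) (hi : i < πε.length)
    (hj : j < πε.length) : pegI πε i j = πε.flatMap (inflBlock πε[i].1 πε[j].1) := by
  rw [pegI, pegInflate, List.flatMap_def]
  congr 1
  refine List.ext_getElem (by simp) fun k hk _ => ?_
  simp only [List.getElem_map, List.getElem_range]
  exact blockVals_inflVec h0 hi hj (by simpa using hk)

end pegI

section flatMap

variable {a b : ℕ} {l : PegPerm}

lemma head?_flatMap_inflBlock :
    (l.flatMap (inflBlock a b)).head? = l.head?.map (inflHead a b) := by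
  cases l <;> simp [head?_inflBlock]

lemma getLast?_flatMap_inflBlock :
    (l.flatMap (inflBlock a b)).getLast? = l.getLast?.map (inflLast a b) := by
  induction l using List.reverseRecOn <;> simp [getLast?_inflBlock]

lemma length_flatMap_inflBlock (h0 : IsPegPermList l) (ha : 1 ≤ a) (hb : 1 ≤ b)
    (ha' : a ≤ l.length) (hb' : b ≤ l.length) :
    (l.flatMap (inflBlock a b)).length = l.length + 2 := by
  have hsum := sum_inflLen_filter_lt ha hb (w := l.length + 1) (by omega) l.length
  rw [List.filter_eq_self.2 (by simp; omega), min_self] at hsum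
  have hl : (l.map (fun r => inflLen a b r.1)).sum = ((l.map Prod.fst).map (inflLen a b)).sum := by
    simp [Function.comp_def]
  rw [List.length_flatMap]
  simp only [length_inflBlock]
  rw [hl, (h0.map _).sum_eq]
  simp only [inflStart, List.length_map, idPerm] at hsum ⊢
  split_ifs at hsum <;> omega

end flatMap

lemma List.exists_eq_append_cons {α : Type*} {l : List α} {i : ℕ} (hi : i < l.length) :
    ∃ A x C, l = A ++ x :: C ∧ A.length = i :=
  ⟨l.take i, l[i], l.drop (i + 1), by rw [← List.drop_eq_getElem_cons, List.take_append_drop],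
    by simp [hi.le]⟩

section pegITilde

variable {πε : PegPerm} {i j : ℕ}

lemma cleanCompact_pegITilde (h0 : IsPegPermList πε) (h1 : CleanCompact πε)
    (h2 : ∀ p ∈ πε, p.2 ≠ .dot) (hij : i ≤ j) (hj : j < πε.length) :
    CleanCompact (pegITilde πε i j) := by
  rw [cleanCompact_iff_isChain] at h1
  rw [pegITilde, pegI_eq_flatMap h0 (hij.trans_lt hj) hj]
  rcases hij.lt_or_eq with hlt | rfl
  · obtain ⟨D, q, C, rfl, rfl⟩ := List.exists_eq_append_cons hj
    obtain ⟨A, p, B, rfl, rfl⟩ := List.exists_eq_append_cons hlt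
    have hperm : (A ++ p :: B ++ q :: C).Perm (p :: q :: (A ++ B ++ C)) := by
      rw [List.perm_iff_count]
      intro x
      simp only [List.count_append, List.count_cons]
      omega
    have hnd := (hperm.map Prod.fst).nodup_iff.1 h0.nodup
    simp only [List.map_cons, List.nodup_cons, List.mem_cons, List.mem_map, not_or, not_exists,
      not_and] at hnd
    rw [show (A ++ p :: B).length + 1 = A.length + B.length + 2 by simp; omega]
    convert cleanCompact_pegSegReverse_flatMap_inflBlock_of_ne h1 h2 hnd.1.1
      fun r hr => ⟨hnd.1.2 r hr, hnd.2.1 r hr⟩ using 3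
    simp
  · obtain ⟨A, p, C, rfl, rfl⟩ := List.exists_eq_append_cons hj
    have hnd := (List.perm_middle.map Prod.fst).nodup_iff.1 h0.nodup
    simp only [List.map_cons, List.nodup_cons, List.mem_map, not_exists, not_and] at hnd
    convert cleanCompact_pegSegReverse_flatMap_inflBlock_self h1 h2
      fun r hr => fun e => hnd.1 r hr e using 3
    simp

lemma length_pegI (h0 : IsPegPermList πε) (hi : i < πε.length) (hj : j < πε.length) :
    (pegI πε i j).length = πε.length + 2 := by
  have ha := h0.fst_bounds (List.getElem_mem hi)
  have hb := h0.fst_bounds (List.getElem_mem hj)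
  rw [pegI_eq_flatMap h0 hi hj, length_flatMap_inflBlock h0 ha.1 hb.1 ha.2 hb.2]

lemma length_pegITilde (h0 : IsPegPermList πε) (hij : i ≤ j) (hj : j < πε.length) :
    (pegITilde πε i j).length = πε.length + 2 := by
  have hlen := length_pegI h0 (hij.trans_lt hj) hj
  rw [pegITilde, length_pegSegReverse (by omega) (by omega), hlen]

lemma snd_ne_dot_of_mem_pegITilde (h0 : IsPegPermList πε) (h2 : ∀ p ∈ πε, p.2 ≠ .dot)
    (hi : i < πε.length) (hj : j < πε.length) {x : ℕ × Deco}
    (hx : x ∈ pegITilde πε i j) :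
    x.2 ≠ .dot := by
  rw [pegITilde, pegI_eq_flatMap h0 hi hj] at hx
  rcases mem_pegSegReverse hx with hx | ⟨y, hy, rfl⟩
  · obtain ⟨r, hr, hx⟩ := List.mem_flatMap.1 hx
    rw [snd_of_mem_inflBlock hx]
    exact h2 r hr
  · obtain ⟨r, hr, hy⟩ := List.mem_flatMap.1 hy
    rw [flipEntry, Ne, flipDeco_eq_dot_iff, snd_of_mem_inflBlock hy]
    exact h2 r hr

lemma headD_pegITilde (h0 : IsPegPermList πε) (hi : i < πε.length) (hj : j < πε.length)
    (hhead : πε.headD pegDefault = (1, .plus)) :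
    (pegITilde πε i j).headD pegDefault = (1, .plus) := by
  have ha := h0.fst_bounds (List.getElem_mem hi)
  have hb := h0.fst_bounds (List.getElem_mem hj)
  rw [pegITilde, List.headD_eq_head?, head?_pegSegReverse i.succ_pos, pegI_eq_flatMap h0 hi hj,
    head?_flatMap_inflBlock]
  obtain ⟨r, t, rfl⟩ := List.exists_cons_of_length_pos (hi.trans_le' i.zero_le)
  obtain rfl : r = (1, .plus) := hhead
  simp [inflHead, inflStart_one ha.1 hb.1]

lemma getLastD_pegITilde (h0 : IsPegPermList πε) (hij : i ≤ j) (hj : j < πε.length)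
    (hlast : πε.getLastD pegDefault = (πε.length, .plus)) :
    (pegITilde πε i j).getLastD pegDefault = (πε.length + 2, .plus) := by
  have hi := hij.trans_lt hj
  have ha := h0.fst_bounds (List.getElem_mem hi)
  have hb := h0.fst_bounds (List.getElem_mem hj)
  have hlen := length_pegI h0 hi hj
  rw [pegITilde, List.getLastD_eq_getLast?, getLast?_pegSegReverse (by omega),
    pegI_eq_flatMap h0 hi hj, getLast?_flatMap_inflBlock]
  have hne : πε ≠ [] := List.ne_nil_of_length_pos (by omega)
  rw [List.getLastD_eq_getLast?, List.getLast?_eq_some_getLast hne, Option.getD_some] at hlast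
  rw [List.getLast?_eq_some_getLast hne, hlast, Option.map_some, Option.getD_some]
  simp only [inflLast, inflStart, inflLen, Prod.mk.injEq, and_true, reduceCtorEq, if_false]
  split_ifs <;> omega

end pegITilde

/-- Indices are 0-indexed: the multiset `I` of the paper is `{i+1, j+1}`. -/
theorem pegITilde_properties (πε : PegPerm) (n : ℕ) (hn : πε.length = n)
    (h0 : IsPegPermList πε) (h1 : CleanCompact πε)
    (h2 : ∀ p ∈ πε, p.2 ≠ Deco.dot)
    (i j : ℕ) (hij : i ≤ j) (hj : j < n) :
    (CleanCompact (pegITilde πε i j) ∧ (pegITilde πε i j).length = n + 2 ∧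
      ∀ p ∈ pegITilde πε i j, p.2 ≠ Deco.dot) ∧
    (πε.headD pegDefault = (1, Deco.plus) → πε.getLastD pegDefault = (n, Deco.plus) →
      (pegITilde πε i j).headD pegDefault = (1, Deco.plus) ∧
      (pegITilde πε i j).getLastD pegDefault = (n + 2, Deco.plus)) := by
  subst hn
  have hi := hij.trans_lt hj
  exact ⟨⟨cleanCompact_pegITilde h0 h1 h2 hij hj, length_pegITilde h0 hij hj,
      fun _ => snd_ne_dot_of_mem_pegITilde h0 h2 hi hj⟩,
    fun hhead hlast => ⟨headD_pegITilde h0 hi hj hhead, getLastD_pegITilde h0 hij hj hlast⟩⟩
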